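/- Let R be a noetherian local commutative ring with maximal ideal m that is complete with respect to the m-adic topology, and let R' be an étale R-algebra. Then the m-adic completion of R' (the completion of R' with respect to the ideal mR') is a finite étale R-algebra. -/

import Mathlib

/-!
Since `R'` is unramified over `R`, its closed fibre `R' ⧸ 𝔪R'` is finite over the residue field.
The completion `Ĉ` of `R'` is `𝔪`-adically Hausdorff with `Ĉ ⧸ 𝔪Ĉ = R' ⧸ 𝔪R'`, so the
topological Nakayama lemma over the complete ring `R` shows that `Ĉ` is a finite `R`-module,
generated already by the image of `R'`. Thus `R' → Ĉ` is surjective and, as a completion of a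
noetherian ring, flat: its kernel `K` satisfies `K = K²`, which makes `Ĉ = R' ⧸ K` étale over `R'`,
hence over `R`.
-/

open Function
open scoped TensorProduct

theorem Submodule.mem_smul_top_pi_iff {R ι : Type*} [CommRing R] [Finite ι] {M : ι → Type*}
    [∀ i, AddCommGroup (M i)] [∀ i, Module R (M i)] (I : Ideal R) (x : ∀ i, M i) :
    x ∈ (I • ⊤ : Submodule R (∀ i, M i)) ↔ ∀ i, x i ∈ (I • ⊤ : Submodule R (M i)) := by
  classical
  have := Fintype.ofFinite ι
  refine ⟨fun hx i ↦ smul_top_le_comap_smul_top I (LinearMap.proj i) hx, fun hx ↦ ?_⟩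
  rw [← Finset.univ_sum_single x]
  exact Submodule.sum_mem _ fun i _ ↦ smul_top_le_comap_smul_top I (LinearMap.single R M i) (hx i)

instance IsPrecomplete.pi {R ι : Type*} [CommRing R] [Finite ι] {M : ι → Type*}
    [∀ i, AddCommGroup (M i)] [∀ i, Module R (M i)] (I : Ideal R) [∀ i, IsPrecomplete I (M i)] :
    IsPrecomplete I (∀ i, M i) where
  prec' f hf := by
    have hlim (i : ι) : ∃ L, ∀ n, f n i ≡ L [SMOD (I ^ n • ⊤ : Submodule R (M i))] :=
      IsPrecomplete.prec inferInstance fun {m n} hmn ↦ by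
        have hfmn := hf hmn
        rw [SModEq.sub_mem] at hfmn ⊢
        exact (Submodule.mem_smul_top_pi_iff _ _).mp hfmn i
    choose L hL using hlim
    refine ⟨L, fun n ↦ ?_⟩
    rw [SModEq.sub_mem, Submodule.mem_smul_top_pi_iff]
    exact fun i ↦ SModEq.sub_mem.mp (hL i n)

theorem surjective_and_finite_of_mkQ_comp_surjective {R M N : Type*} [CommRing R]
    [AddCommGroup M] [Module R M] [AddCommGroup N] [Module R N] (I : Ideal R)
    [IsPrecomplete I R] [IsHausdorff I M] [Module.Finite R (N ⧸ (I • ⊤ : Submodule R N))]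
    {f : N →ₗ[R] M} (hf : Surjective ((I • ⊤ : Submodule R M).mkQ ∘ₗ f)) :
    Surjective f ∧ Module.Finite R M := by
  obtain ⟨n, q, hq⟩ := Module.Finite.exists_fin' R (N ⧸ (I • ⊤ : Submodule R N))
  obtain ⟨g, hg⟩ := Module.projective_lifting_property (I • ⊤ : Submodule R N).mkQ q
    (Submodule.mkQ_surjective _)
  have hfg : Surjective ((I • ⊤ : Submodule R M).mkQ ∘ₗ f ∘ₗ g) := by
    intro y
    obtain ⟨x, rfl⟩ := hf y
    obtain ⟨z, hz⟩ := hq ((I • ⊤ : Submodule R N).mkQ x)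
    have hgz : g z - x ∈ (I • ⊤ : Submodule R N) := by
      rw [← Submodule.Quotient.eq, ← Submodule.mkQ_apply, ← LinearMap.comp_apply, hg, hz]
      rfl
    refine ⟨z, (Submodule.Quotient.eq _).mpr ?_⟩
    simpa using Submodule.smul_top_le_comap_smul_top I f hgz
  -- `Fin n → R` is `I`-precomplete by `IsPrecomplete.pi`
  have hsurj := surjective_of_mkQ_comp_surjective hfg
  exact ⟨(LinearMap.coe_comp f g ▸ hsurj).of_comp, .of_surjective _ hsurj⟩

theorem surjective_algebraMap_and_finite_of_mk_map_comp_surjective {R S T : Type*} [CommRing R]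
    [CommRing S] [CommRing T] [Algebra R S] [Algebra S T] [Algebra R T] [IsScalarTower R S T]
    (I : Ideal R) [IsPrecomplete I R] [IsHausdorff (I.map (algebraMap R T)) T]
    [Module.Finite R (S ⧸ I.map (algebraMap R S))]
    (h : Surjective ((Ideal.Quotient.mk (I.map (algebraMap R T))).comp (algebraMap S T))) :
    Surjective (algebraMap S T) ∧ Module.Finite R T := by
  have : IsHausdorff I T := IsHausdorff.map_algebraMap_iff.mp ‹_›
  have : Module.Finite R (S ⧸ (I • ⊤ : Submodule R S)) := by
    rw [Ideal.smul_top_eq_map]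
    exact .equiv (Submodule.Quotient.restrictScalarsEquiv R _).symm
  refine surjective_and_finite_of_mkQ_comp_surjective I
    (f := (IsScalarTower.toAlgHom R S T).toLinearMap) ?_
  rw [Ideal.smul_top_eq_map]
  exact h

theorem Algebra.FormallyUnramified.finite_quotient_map_of_isMaximal {R S : Type*} [CommRing R]
    [CommRing S] [Algebra R S] [Algebra.FormallyUnramified R S] [Algebra.FiniteType R S]
    (m : Ideal R) [m.IsMaximal] : Module.Finite R (S ⧸ m.map (algebraMap R S)) := by
  let := Ideal.Quotient.field m
  have : Module.Finite (R ⧸ m) ((R ⧸ m) ⊗[R] S) := Algebra.FormallyUnramified.finite_of_free _ _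
  have : Module.Finite (R ⧸ m) (S ⧸ m.map (algebraMap R S)) :=
    .equiv (Algebra.TensorProduct.quotIdealMapEquivQuotTensor S m).symm.toLinearEquiv
  exact .trans (R ⧸ m) (S ⧸ m.map (algebraMap R S))

theorem Algebra.FormallyEtale.of_surjective_of_flat {A B : Type*} [CommRing A] [CommRing B]
    [Algebra A B] [Module.Flat A B] (h : Surjective (algebraMap A B)) :
    Algebra.FormallyEtale A B := by
  have : (RingHom.ker (algebraMap A B)).Pure :=
    .of_linearEquiv (Ideal.quotientKerAlgEquivOfSurjective (f := Algebra.ofId A B) h).toLinearEquiv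
  exact (Algebra.FormallyEtale.iff_of_surjective h).mpr (Ideal.isIdempotentElem_of_pure _)

theorem AdicCompletion.surjective_mk_map_comp_algebraMap {R : Type*} [CommRing R] {I : Ideal R}
    (hI : I.FG) :
    Surjective ((Ideal.Quotient.mk (I.map (algebraMap R (AdicCompletion I R)))).comp
      (algebraMap R (AdicCompletion I R))) := by
  intro c
  obtain ⟨c, rfl⟩ := Ideal.Quotient.mk_surjective c
  obtain ⟨x, hx⟩ := Ideal.Quotient.mk_surjective (evalOneₐ I c)
  refine ⟨x, Ideal.Quotient.eq.mpr ?_⟩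
  refine (ker_evalOneₐ_eq_map I hI).le ?_
  rw [RingHom.mem_ker]
  simp [← hx]

/-- Let R be a complete noetherian local ring with maximal ideal m and let R' be an étale
R-algebra. Then the m-adic completion of R' (the completion of R' with respect to the
ideal m·R') is a finite étale R-algebra. -/
theorem adicCompletion_finite_etale
    (R R' : Type) [CommRing R] [IsLocalRing R] [IsNoetherianRing R]
    [IsAdicComplete (IsLocalRing.maximalIdeal R) R]
    [CommRing R'] [Algebra R R'] [Algebra.Etale R R'] :
    letI C := AdicCompletion ((IsLocalRing.maximalIdeal R).map (algebraMap R R')) R'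
    letI : Algebra R C := ((algebraMap R' C).comp (algebraMap R R')).toAlgebra
    Algebra.Etale R C ∧ Module.Finite R C := by
  set m := IsLocalRing.maximalIdeal R
  set I := m.map (algebraMap R R')
  have : IsNoetherianRing R' := Algebra.FiniteType.isNoetherianRing R R'
  have hI : I.FG := IsNoetherian.noetherian I
  have : IsHausdorff (m.map (algebraMap R (AdicCompletion I R'))) (AdicCompletion I R') := by
    rw [IsScalarTower.algebraMap_eq R R' (AdicCompletion I R'), ← Ideal.map_map,
      IsHausdorff.map_algebraMap_iff]
    exact (AdicCompletion.isAdicComplete hI).toIsHausdorff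
  have : Module.Finite R (R' ⧸ I) := Algebra.FormallyUnramified.finite_quotient_map_of_isMaximal m
  obtain ⟨hsurj, hfin⟩ := surjective_algebraMap_and_finite_of_mk_map_comp_surjective (S := R') m
    (T := AdicCompletion I R') (by
      rw [IsScalarTower.algebraMap_eq R R' (AdicCompletion I R'), ← Ideal.map_map]
      exact AdicCompletion.surjective_mk_map_comp_algebraMap hI)
  have : Algebra.FormallyEtale R' (AdicCompletion I R') := .of_surjective_of_flat hsurj
  have : Algebra.FinitePresentation R' (AdicCompletion I R') :=
    Algebra.FinitePresentation.of_finiteType.mp (.of_surjective (Algebra.ofId R' _) hsurj)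
  have : Algebra.Etale R' (AdicCompletion I R') := { }
  have hetale : Algebra.Etale R (AdicCompletion I R') := .comp R R' _
  -- the statement's `Algebra R C` is the library's algebra structure on `AdicCompletion`
  rw [Algebra.algebra_ext ((algebraMap R' _).comp (algebraMap R R')).toAlgebra
    (inferInstanceAs (Algebra R (AdicCompletion I R'))) fun _ ↦ rfl]
  exact ⟨hetale, hfin⟩
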